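/- arXiv:1110.2216 — 9 statements merged into one kernel-verified Lean document; each statement's English description precedes it below -/
import Mathlib

section
/- Let (Σ',R') with map abs : Σ → Σ' be an abstraction of a lightest derivation problem (Σ,R) with additive rules. Then for every statement C ∈ Σ, ℓ(abs(C), R') ≤ ℓ(C, R): the lightest derivable weight of the abstraction of C is at most the lightest derivable weight of C. -/
open scoped ENNReal

/-- A lightest derivation problem with additive rules: each rule
`A_1,...,A_n →_v C` assigns to the conclusion the weight `v` plus the sum of
the antecedent weights, with `v ≥ 0`. -/
structure ALDP where
  Stmt : Type
  Rule : Type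
  n : Rule → ℕ
  ant : (r : Rule) → Fin (n r) → Stmt
  concl : Rule → Stmt
  v : Rule → ℝ≥0∞

namespace ALDP

/-- Derivability of a weight assignment `(B = w)`: there is a derivation tree
for `B` whose weight (sum of the weights of the rules in it) is `w`. -/
inductive Derives (P : ALDP) : P.Stmt → ℝ≥0∞ → Prop
  | step (r : P.Rule) (w : Fin (P.n r) → ℝ≥0∞)
      (hd : ∀ i, Derives P (P.ant r i) (w i)) :
      Derives P (P.concl r) (P.v r + ∑ i, w i)

/-- `ℓ(B,R)`, the infimum of the weights derivable for `B`. -/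
noncomputable def ell (P : ALDP) (B : P.Stmt) : ℝ≥0∞ := sInf {w | P.Derives B w}

/-- `CtxDerives P goal B u` : `B` has a context of weight `u`, i.e. a
derivation of `goal` with a hole that can be filled in by a derivation of `B`;
the weight of a context is the sum of the weights of the rules in it. -/
inductive CtxDerives (P : ALDP) (goal : P.Stmt) : P.Stmt → ℝ≥0∞ → Prop
  | base : CtxDerives P goal goal 0
  | step (r : P.Rule) (i : Fin (P.n r)) (u : ℝ≥0∞) (w : Fin (P.n r) → ℝ≥0∞)
      (hc : CtxDerives P goal (P.concl r) u)
      (hd : ∀ j, j ≠ i → P.Derives (P.ant r j) (w j)) :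
      CtxDerives P goal (P.ant r i) (u + P.v r + ∑ j ∈ Finset.univ.erase i, w j)

/-- `ℓ(context(B),R)`, the weight of a lightest context for `B`. -/
noncomputable def ellCtx (P : ALDP) (goal B : P.Stmt) : ℝ≥0∞ :=
  sInf {u | P.CtxDerives goal B u}

/-- `(Q, abs)` is an abstraction of `P`: for every rule
`A_1,...,A_n →_v C` of `P` there is a rule
`abs(A_1),...,abs(A_n) →_{v'} abs(C)` of `Q` with `v' ≤ v`. -/
def IsAbstraction (P Q : ALDP) (abs : P.Stmt → Q.Stmt) : Prop :=
  ∀ r : P.Rule, ∃ r' : Q.Rule, ∃ e : Q.n r' = P.n r,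
    (∀ i : Fin (P.n r), Q.ant r' (Fin.cast e.symm i) = abs (P.ant r i)) ∧
    Q.concl r' = abs (P.concl r) ∧ Q.v r' ≤ P.v r

/-- A heuristic `h` is monotone (for additive rules) if for every rule
`A_1,...,A_n →_v C` and derivable weight assignments `(A_i = w_i)`,
`w_i + h(A_i) ≤ v + w_1 + ... + w_n + h(C)`. -/
def MonotoneHeuristic (P : ALDP) (h : P.Stmt → ℝ≥0∞) : Prop :=
  ∀ (r : P.Rule) (w : Fin (P.n r) → ℝ≥0∞),
    (∀ i, P.Derives (P.ant r i) (w i)) →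
    ∀ i, w i + h (P.ant r i) ≤ P.v r + (∑ j, w j) + h (P.concl r)

end ALDP

namespace ALDP

theorem ell_le_ell_of_forall_derives {P Q : ALDP} {B : P.Stmt} {B' : Q.Stmt}
    (h : ∀ w, P.Derives B w → ∃ w' ≤ w, Q.Derives B' w') : Q.ell B' ≤ P.ell B :=
  le_sInf fun w hw =>
    let ⟨_, hle, hd'⟩ := h w hw
    (sInf_le hd').trans hle

theorem IsAbstraction.exists_derives_le {P Q : ALDP} {abs : P.Stmt → Q.Stmt}
    (habs : IsAbstraction P Q abs) {B : P.Stmt} {w : ℝ≥0∞} (hd : P.Derives B w) :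
    ∃ w' ≤ w, Q.Derives (abs B) w' := by
  induction hd with
  | step r w _ ih =>
    obtain ⟨r', e, hant, hconcl, hv⟩ := habs r
    choose w' hle hd' using ih
    have hderiv : Q.Derives (Q.concl r') (Q.v r' + ∑ i, w' (Fin.cast e i)) :=
      Derives.step r' (fun i => w' (Fin.cast e i)) fun i => by
        simpa only [← hant, Fin.cast_cast, Fin.cast_eq_self] using hd' (Fin.cast e i)
    refine ⟨_, ?_, hconcl ▸ hderiv⟩
    rw [Fin.sum_congr' w' e]
    exact add_le_add hv (Finset.sum_le_sum fun i _ => hle i)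

end ALDP

/-- If `(Σ',R')` with map `abs` is an abstraction of an additive
lightest derivation problem `(Σ,R)`, then for every statement `C`,
`ℓ(abs(C), R') ≤ ℓ(C, R)`. -/
theorem abstraction_ell_le (P Q : ALDP) (abs : P.Stmt → Q.Stmt)
    (habs : ALDP.IsAbstraction P Q abs) :
    ∀ C : P.Stmt, Q.ell (abs C) ≤ P.ell C :=
  fun _ => ALDP.ell_le_ell_of_forall_derives fun _ => habs.exists_derives_le
end

section
/- Let (Σ',R') with map abs be an abstraction of an additive lightest derivation problem (Σ,R) with goal statement goal, and let the abstract goal be abs(goal). Then for every statement C ∈ Σ, ℓ(context(abs(C)), R') ≤ ℓ(context(C), R); that is, the heuristic h(C) = ℓ(context(abs(C)), R') is admissible. -/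
open scoped ENNReal

/-!
An abstraction maps every concrete rule to an abstract rule that is no heavier, so mapping
a derivation (resp. a context) rule by rule yields an abstract derivation (resp. context) of the
image statement that is no heavier. Taking infima gives the inequality.
-/

namespace ALDP

variable {P Q : ALDP}

theorem Derives.step_cast {m : ℕ} (r : P.Rule) (e : P.n r = m) (w : Fin m → ℝ≥0∞)
    (hd : ∀ i, P.Derives (P.ant r (Fin.cast e.symm i)) (w i)) :
    P.Derives (P.concl r) (P.v r + ∑ i, w i) := by
  subst e
  exact Derives.step r w hd

theorem CtxDerives.step_cast {goal : P.Stmt} {m : ℕ} (r : P.Rule) (e : P.n r = m) (i : Fin m)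
    (u : ℝ≥0∞) (w : Fin m → ℝ≥0∞) (hc : P.CtxDerives goal (P.concl r) u)
    (hd : ∀ j, j ≠ i → P.Derives (P.ant r (Fin.cast e.symm j)) (w j)) :
    P.CtxDerives goal (P.ant r (Fin.cast e.symm i))
      (u + P.v r + ∑ j ∈ Finset.univ.erase i, w j) := by
  subst e
  exact CtxDerives.step r i u w hc hd

namespace IsAbstraction

variable {abs : P.Stmt → Q.Stmt}

theorem exists_derives_le_s4 (habs : IsAbstraction P Q abs) {B : P.Stmt} {w : ℝ≥0∞}
    (h : P.Derives B w) : ∃ w' ≤ w, Q.Derives (abs B) w' := by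
  induction h with
  | step r w _ ih =>
    obtain ⟨r', e, hant, hconcl, hv⟩ := habs r
    choose w' hw'le hw' using ih
    refine ⟨Q.v r' + ∑ i, w' i, add_le_add hv (Finset.sum_le_sum fun i _ => hw'le i), ?_⟩
    rw [← hconcl]
    exact Derives.step_cast r' e w' fun i => hant i ▸ hw' i

theorem exists_ctxDerives_le (habs : IsAbstraction P Q abs) {goal C : P.Stmt} {u : ℝ≥0∞}
    (h : P.CtxDerives goal C u) : ∃ u' ≤ u, Q.CtxDerives (abs goal) (abs C) u' := by
  induction h with
  | base => exact ⟨0, le_rfl, CtxDerives.base⟩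
  | step r i u w _ hd ih =>
    obtain ⟨u', hu'le, hu'⟩ := ih
    obtain ⟨r', e, hant, hconcl, hv⟩ := habs r
    -- the hole `i` carries no derivation; any weight `≤ w i` will do there
    have hside : ∀ j, ∃ w' ≤ w j, j ≠ i → Q.Derives (abs (P.ant r j)) w' := fun j =>
      if hj : j = i then ⟨w j, le_rfl, fun hne => absurd hj hne⟩
      else
        let ⟨w', hle, hder⟩ := habs.exists_derives_le_s4 (hd j hj)
        ⟨w', hle, fun _ => hder⟩
    choose w' hw'le hw' using hside
    refine ⟨u' + Q.v r' + ∑ j ∈ Finset.univ.erase i, w' j,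
      add_le_add (add_le_add hu'le hv) (Finset.sum_le_sum fun j _ => hw'le j), ?_⟩
    rw [← hant]
    exact CtxDerives.step_cast r' e i u' w' (hconcl ▸ hu') fun j hj => hant j ▸ hw' j hj

end IsAbstraction

end ALDP

/-- If `(Σ',R')` with map `abs` is an abstraction of an additive
lightest derivation problem `(Σ,R)` with goal `goal` (the abstract goal being
`abs(goal)`), then for every statement `C`,
`ℓ(context(abs(C)), R') ≤ ℓ(context(C), R)`; i.e. the heuristic
`h(C) = ℓ(context(abs(C)), R')` is admissible. -/
theorem abstraction_ellCtx_le (P Q : ALDP) (abs : P.Stmt → Q.Stmt)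
    (habs : ALDP.IsAbstraction P Q abs) (goal : P.Stmt) :
    ∀ C : P.Stmt, Q.ellCtx (abs goal) (abs C) ≤ P.ellCtx goal C := by
  intro C
  refine le_sInf fun u hu => ?_
  obtain ⟨u', hu'le, hu'⟩ := habs.exists_ctxDerives_le hu
  exact (sInf_le hu').trans hu'le
end

section
/- Let (Σ',R') with map abs be an abstraction of an additive lightest derivation problem (Σ,R). Then the heuristic h(C) = ℓ(context(abs(C)), R') is monotone: for every rule A_1,...,A_n →_v C in R and derivable weight assignments (A_i = w_i), w_i + h(A_i) ≤ v + w_1 + ... + w_n + h(C) for each i. -/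
open scoped ENNReal

/-! An abstraction maps every derivation to one of no larger weight, and the rule
`abs(A_1),...,abs(A_n) →_{v'} abs(C)` turns every context of `abs(C)` into a context of
`abs(A_i)` costing at most `v + Σ_{j ≠ i} w_j` more. Adding `w_i` to both sides gives
the monotonicity inequality. -/

namespace ALDP

theorem ellCtx_ant_le (Q : ALDP) (goal : Q.Stmt) (r : Q.Rule) (i : Fin (Q.n r))
    (w : Fin (Q.n r) → ℝ≥0∞) (hd : ∀ j, j ≠ i → Q.Derives (Q.ant r j) (w j)) :
    Q.ellCtx goal (Q.ant r i) ≤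
      Q.ellCtx goal (Q.concl r) + (Q.v r + ∑ j ∈ Finset.univ.erase i, w j) := by
  conv_rhs => rw [ellCtx, ENNReal.sInf_add]
  refine le_iInf₂ fun u hu => ?_
  rw [← add_assoc]
  exact sInf_le (CtxDerives.step r i u w hu hd)

namespace IsAbstraction

variable {P Q : ALDP} {abs : P.Stmt → Q.Stmt}

theorem derives (habs : IsAbstraction P Q abs) {A : P.Stmt} {w : ℝ≥0∞}
    (h : P.Derives A w) : ∃ w' ≤ w, Q.Derives (abs A) w' := by
  induction h with
  | step r w _ ih =>
    choose w' hle hder using ih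
    obtain ⟨r', e, hant, hconcl, hv⟩ := habs r
    refine ⟨Q.v r' + ∑ k, w' (finCongr e k), ?_, ?_⟩
    · rw [Equiv.sum_comp]
      exact add_le_add hv (Finset.sum_le_sum fun j _ => hle j)
    · rw [← hconcl]
      exact Derives.step r' _ fun k => hant (Fin.cast e k) ▸ hder (Fin.cast e k)

theorem ellCtx_ant_le (habs : IsAbstraction P Q abs) (goal : Q.Stmt) (r : P.Rule)
    (i : Fin (P.n r)) (w : Fin (P.n r) → ℝ≥0∞)
    (hd : ∀ j, j ≠ i → P.Derives (P.ant r j) (w j)) :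
    Q.ellCtx goal (abs (P.ant r i)) ≤
      Q.ellCtx goal (abs (P.concl r)) + (P.v r + ∑ j ∈ Finset.univ.erase i, w j) := by
  obtain ⟨r', e, hant, hconcl, hv⟩ := habs r
  have hder : ∀ j, j ≠ i → ∃ w' ≤ w j, Q.Derives (abs (P.ant r j)) w' :=
    fun j hj => habs.derives (hd j hj)
  choose! w' hle hder using hder
  have hsum : ∑ k ∈ Finset.univ.erase (Fin.cast e.symm i), w' (finCongr e k) =
      ∑ j ∈ Finset.univ.erase i, w' j :=
    Finset.sum_equiv (finCongr e) (fun k => by simp [Fin.ext_iff]) fun _ _ => rfl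
  calc Q.ellCtx goal (abs (P.ant r i))
      = Q.ellCtx goal (Q.ant r' (Fin.cast e.symm i)) := by rw [hant]
    _ ≤ Q.ellCtx goal (Q.concl r') +
          (Q.v r' + ∑ k ∈ Finset.univ.erase (Fin.cast e.symm i), w' (finCongr e k)) :=
        Q.ellCtx_ant_le goal r' _ _ fun k hk =>
          hant (Fin.cast e k) ▸ hder _ (fun h => hk (by simp [← h]))
    _ ≤ Q.ellCtx goal (abs (P.concl r)) + (P.v r + ∑ j ∈ Finset.univ.erase i, w j) := by
        rw [hsum, hconcl]
        gcongr with j hj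
        exact hle j (Finset.ne_of_mem_erase hj)

end IsAbstraction

end ALDP

/-- If `(Σ',R')` with map `abs` is an abstraction of an additive
lightest derivation problem `(Σ,R)` with goal `goal`, then the heuristic
`h(C) = ℓ(context(abs(C)), R')` is monotone: for every rule
`A_1,...,A_n →_v C` in `R` and derivable weight assignments `(A_i = w_i)`,
`w_i + h(A_i) ≤ v + w_1 + ... + w_n + h(C)` for each `i`. -/
theorem abstraction_heuristic_monotone (P Q : ALDP) (abs : P.Stmt → Q.Stmt)
    (habs : ALDP.IsAbstraction P Q abs) (goal : P.Stmt) :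
    P.MonotoneHeuristic (fun C => Q.ellCtx (abs goal) (abs C)) := by
  intro r w hd i
  calc w i + Q.ellCtx (abs goal) (abs (P.ant r i))
      ≤ w i + (Q.ellCtx (abs goal) (abs (P.concl r)) +
          (P.v r + ∑ j ∈ Finset.univ.erase i, w j)) :=
        add_le_add_right (habs.ellCtx_ant_le _ r i w fun j _ => hd j) _
    _ = P.v r + ∑ j, w j + Q.ellCtx (abs goal) (abs (P.concl r)) := by
        rw [← Finset.add_sum_erase _ w (Finset.mem_univ i)]
        ring
end

section
/- During the execution of the prioritized rules A(R) of A* lightest derivation with a monotone heuristic h and non-decreasing weight functions, every weight assignment (B = w) that enters the set S satisfies w = ℓ(B,R), i.e., all expanded assignments are lightest derivation weights. -/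
open scoped ENNReal

attribute [local instance] Classical.propDecidable

/-- A lightest derivation problem given by a set of prioritized rules: each
rule `A_1,...,A_n →_g C` has a weight function `g` and a priority function
`pr`, both depending on the antecedent weights. -/
structure PLDP where
  Stmt : Type
  Rule : Type
  n : Rule → ℕ
  ant : (r : Rule) → Fin (n r) → Stmt
  concl : Rule → Stmt
  g : (r : Rule) → (Fin (n r) → ℝ≥0∞) → ℝ≥0∞
  pr : (r : Rule) → (Fin (n r) → ℝ≥0∞) → ℝ≥0∞

namespace PLDP

/-- Derivability of a weight assignment `(B = w)` using the rules. -/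
inductive Derives (P : PLDP) : P.Stmt → ℝ≥0∞ → Prop
  | step (r : P.Rule) (w : Fin (P.n r) → ℝ≥0∞)
      (hd : ∀ i, Derives P (P.ant r i) (w i)) :
      Derives P (P.concl r) (P.g r w)

/-- `ℓ(B,R)`, the infimum of the weights derivable for `B`. -/
noncomputable def ell (P : PLDP) (B : P.Stmt) : ℝ≥0∞ := sInf {w | P.Derives B w}

/-- A state of the generic execution procedure: the set `S` of expanded weight
assignments (a partial map from statements to weights) together with the
priority queue `Q` of pending weight assignments with their priorities. -/
abbrev State (P : PLDP) :=
  (P.Stmt → Option ℝ≥0∞) × Set (P.Stmt × ℝ≥0∞ × ℝ≥0∞)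

/-- The initial queue: the assignments defined by rules with no antecedents,
at the priorities given by those rules. -/
def initQ (P : PLDP) : Set (P.Stmt × ℝ≥0∞ × ℝ≥0∞) :=
  {x | ∃ (r : P.Rule) (_ : P.n r = 0) (w : Fin (P.n r) → ℝ≥0∞),
    x = (P.concl r, P.g r w, P.pr r w)}

/-- The initial state: `S` is empty, `Q` contains the conclusions of rules
with no antecedents. -/
def init (P : PLDP) : P.State := (fun _ => none, P.initQ)

/-- The assignments derivable in a single rule step from `(B = ·)` and the
other assignments recorded in `S`, queued at the priority given by the rule. -/
def newItems (P : PLDP) (S : P.Stmt → Option ℝ≥0∞) (B : P.Stmt) :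
    Set (P.Stmt × ℝ≥0∞ × ℝ≥0∞) :=
  {x | ∃ (r : P.Rule) (w : Fin (P.n r) → ℝ≥0∞),
      (∀ i, S (P.ant r i) = some (w i)) ∧ (∃ i, P.ant r i = B) ∧
      x = (P.concl r, P.g r w, P.pr r w)}

/-- One iteration of the generic procedure: remove a minimum-priority
assignment `(B = w)` from the queue; if `B` already has a weight in `S` it is
ignored, otherwise `(B = w)` is added to `S` and every assignment derivable
from `(B = w)` and the other assignments in `S` by a single rule is inserted
into the queue at the priority specified by the rule. -/
inductive Step (P : PLDP) : P.State → P.State → Prop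
  | skip (S : P.Stmt → Option ℝ≥0∞) (Q : Set (P.Stmt × ℝ≥0∞ × ℝ≥0∞))
      (B : P.Stmt) (w q : ℝ≥0∞)
      (hmem : (B, w, q) ∈ Q) (hmin : ∀ x ∈ Q, q ≤ x.2.2)
      (hold : S B ≠ none) :
      Step P (S, Q) (S, Q \ {(B, w, q)})
  | expand (S : P.Stmt → Option ℝ≥0∞) (Q : Set (P.Stmt × ℝ≥0∞ × ℝ≥0∞))
      (B : P.Stmt) (w q : ℝ≥0∞)
      (hmem : (B, w, q) ∈ Q) (hmin : ∀ x ∈ Q, q ≤ x.2.2)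
      (hnew : S B = none) :
      Step P (S, Q) (Function.update S B (some w),
        (Q \ {(B, w, q)}) ∪ P.newItems (Function.update S B (some w)) B)

/-- The states reachable by the generic execution procedure. -/
inductive Reaches (P : PLDP) : P.State → Prop
  | init : Reaches P P.init
  | step (s s' : P.State) (h : Reaches P s) (hs : P.Step s s') : Reaches P s'

/-- The step at which a statement `B` is expanded (moved from the queue into
`S`). -/
def StepExpands (P : PLDP) (s s' : P.State) (B : P.Stmt) : Prop :=
  P.Step s s' ∧ s.1 B = none ∧ s'.1 B ≠ none

/-- A heuristic `h` is monotone if for every rule and derivable antecedent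
weights `w_i`, `w_i + h(A_i) ≤ g(w_1,...,w_n) + h(C)`. -/
def MonotoneHeuristic (P : PLDP) (h : P.Stmt → ℝ≥0∞) : Prop :=
  ∀ (r : P.Rule) (w : Fin (P.n r) → ℝ≥0∞),
    (∀ i, P.Derives (P.ant r i) (w i)) →
    ∀ i, w i + h (P.ant r i) ≤ P.g r w + h (P.concl r)

end PLDP

/-! For every derivation of an unexpanded statement `C` of weight `v`, the A* queue holds an
item of priority at most `v + h C`. At the lowest unexpanded node of the derivation all
antecedents are expanded at their lightest weights, so, `g` being monotone, an item for that
node is queued at priority at most its weight plus `h`; monotonicity of `h` carries the bound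
along the derivation up to `C`. Hence when `(B = w)` is removed with the minimal priority
`w + h B`, every derivation of `B` weighs at least `w`, the finite `h B` cancelling. -/

theorem Function.update_eq_some_cases {α β : Type*} [DecidableEq α] {f : α → Option β}
    {a x : α} {b v : β} (h : Function.update f a (some b) x = some v) :
    (x = a ∧ v = b) ∨ f x = some v := by
  rw [Function.update_apply] at h
  split_ifs at h with hx
  exacts [.inl ⟨hx, (Option.some_injective _ h).symm⟩, .inr h]

theorem Set.mem_diff_singleton_or_fst_eq {α β : Type*} {Q : Set (α × β)} {x y : α × β}
    (hx : x ∈ Q) : x ∈ Q \ {y} ∨ x.1 = y.1 := by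
  by_cases hxy : x = y
  · exact .inr (congrArg Prod.fst hxy)
  · exact .inl ⟨hx, hxy⟩

namespace PLDP

variable {P : PLDP} {h : P.Stmt → ℝ≥0∞}

theorem ell_le_of_derives {B : P.Stmt} {w : ℝ≥0∞} (hB : P.Derives B w) : P.ell B ≤ w :=
  sInf_le hB

theorem derives_of_n_eq_zero {r : P.Rule} (hn : P.n r = 0) (w : Fin (P.n r) → ℝ≥0∞) :
    P.Derives (P.concl r) (P.g r w) :=
  .step r w fun i => (Fin.cast hn i).elim0

structure AstarInv (P : PLDP) (h : P.Stmt → ℝ≥0∞) (s : P.State) : Prop where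
  queue_derives : ∀ B w q, (B, w, q) ∈ s.2 → P.Derives B w
  queue_priority : ∀ B w q, (B, w, q) ∈ s.2 → q = w + h B
  expanded_derives : ∀ B w, s.1 B = some w → P.Derives B w
  expanded_eq_ell : ∀ B w, s.1 B = some w → w = P.ell B
  rule_covered : ∀ (r : P.Rule) (w : Fin (P.n r) → ℝ≥0∞),
    (∀ i, s.1 (P.ant r i) = some (w i)) →
      s.1 (P.concl r) ≠ none ∨ ∃ u p, (P.concl r, u, p) ∈ s.2 ∧ p ≤ P.pr r w

namespace AstarInv

variable {s : P.State}

theorem frontier (hg : ∀ r, Monotone (P.g r)) (hmono : P.MonotoneHeuristic h)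
    (hpr : ∀ r w, P.pr r w = P.g r w + h (P.concl r)) (hinv : AstarInv P h s)
    {C : P.Stmt} {v : ℝ≥0∞} (hC : P.Derives C v) :
    s.1 C ≠ none ∨ ∃ D u p, (D, u, p) ∈ s.2 ∧ p ≤ v + h C := by
  induction hC with
  | step r w hd ih =>
    by_cases hunexp : ∃ i, s.1 (P.ant r i) = none
    · obtain ⟨i, hi⟩ := hunexp
      obtain ⟨D, u, p, hmem, hp⟩ := (ih i).resolve_left (not_not.mpr hi)
      exact .inr ⟨D, u, p, hmem, hp.trans (hmono r w hd i)⟩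
    · choose w' hw' using fun i => Option.ne_none_iff_exists'.mp fun hi => hunexp ⟨i, hi⟩
      refine (hinv.rule_covered r w' hw').imp id fun ⟨u, p, hmem, hp⟩ =>
        ⟨P.concl r, u, p, hmem, hp.trans ?_⟩
      have hw'w : w' ≤ w := fun i =>
        (hinv.expanded_eq_ell _ _ (hw' i)).trans_le (ell_le_of_derives (hd i))
      rw [hpr]
      exact add_le_add_left (hg r hw'w) _

theorem eq_ell_of_isMin (hfin : ∀ B, h B ≠ ⊤) (hg : ∀ r, Monotone (P.g r))
    (hmono : P.MonotoneHeuristic h) (hpr : ∀ r w, P.pr r w = P.g r w + h (P.concl r))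
    {S : P.Stmt → Option ℝ≥0∞} {Q : Set (P.Stmt × ℝ≥0∞ × ℝ≥0∞)} (hinv : AstarInv P h (S, Q))
    {B : P.Stmt} {w q : ℝ≥0∞} (hmem : (B, w, q) ∈ Q) (hmin : ∀ x ∈ Q, q ≤ x.2.2)
    (hnew : S B = none) : w = P.ell B := by
  refine le_antisymm (le_sInf fun v hv => ?_) (ell_le_of_derives (hinv.queue_derives _ _ _ hmem))
  obtain ⟨D, u, p, hD, hp⟩ := (hinv.frontier hg hmono hpr hv).resolve_left (not_not.mpr hnew)
  have hq : w + h B ≤ v + h B := hinv.queue_priority _ _ _ hmem ▸ (hmin _ hD).trans hp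
  exact (ENNReal.add_le_add_iff_right (hfin B)).mp hq

theorem init (hpr : ∀ r w, P.pr r w = P.g r w + h (P.concl r)) : AstarInv P h P.init where
  queue_derives := by
    rintro _ _ _ ⟨r, hn, w, ⟨⟩⟩
    exact derives_of_n_eq_zero hn w
  queue_priority := by
    rintro _ _ _ ⟨r, -, w, ⟨⟩⟩
    exact hpr r w
  expanded_derives _ _ hB := nomatch hB
  expanded_eq_ell _ _ hB := nomatch hB
  rule_covered r w hw := by
    by_cases hn : P.n r = 0
    · exact .inr ⟨_, _, ⟨r, hn, w, rfl⟩, le_rfl⟩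
    · nomatch hw ⟨0, Nat.pos_of_ne_zero hn⟩

theorem skip {S : P.Stmt → Option ℝ≥0∞} {Q : Set (P.Stmt × ℝ≥0∞ × ℝ≥0∞)}
    (hinv : AstarInv P h (S, Q)) {B : P.Stmt} {w q : ℝ≥0∞} (hold : S B ≠ none) :
    AstarInv P h (S, Q \ {(B, w, q)}) where
  queue_derives C u p hC := hinv.queue_derives C u p hC.1
  queue_priority C u p hC := hinv.queue_priority C u p hC.1
  expanded_derives := hinv.expanded_derives
  expanded_eq_ell := hinv.expanded_eq_ell
  rule_covered r w' hw' := by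
    obtain hC | ⟨u, p, hmem, hp⟩ := hinv.rule_covered r w' hw'
    · exact .inl hC
    · obtain hmem' | hCB := Set.mem_diff_singleton_or_fst_eq (y := (B, w, q)) hmem
      · exact .inr ⟨u, p, hmem', hp⟩
      · exact .inl ((show P.concl r = B from hCB) ▸ hold)

theorem expand (hfin : ∀ B, h B ≠ ⊤) (hg : ∀ r, Monotone (P.g r))
    (hmono : P.MonotoneHeuristic h) (hpr : ∀ r w, P.pr r w = P.g r w + h (P.concl r))
    {S : P.Stmt → Option ℝ≥0∞} {Q : Set (P.Stmt × ℝ≥0∞ × ℝ≥0∞)} (hinv : AstarInv P h (S, Q))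
    {B : P.Stmt} {w q : ℝ≥0∞} (hmem : (B, w, q) ∈ Q) (hmin : ∀ x ∈ Q, q ≤ x.2.2)
    (hnew : S B = none) :
    AstarInv P h (Function.update S B (some w),
      (Q \ {(B, w, q)}) ∪ P.newItems (Function.update S B (some w)) B) := by
  have expanded_derives : ∀ C v, Function.update S B (some w) C = some v → P.Derives C v := by
    intro C v hC
    obtain ⟨rfl, rfl⟩ | hC := Function.update_eq_some_cases hC
    exacts [hinv.queue_derives _ _ _ hmem, hinv.expanded_derives _ _ hC]
  have expanded_of_old : ∀ C, C = B ∨ S C ≠ none → Function.update S B (some w) C ≠ none := by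
    intro C hC
    rw [Function.update_apply]
    split_ifs with hCB
    exacts [Option.some_ne_none w, hC.resolve_left hCB]
  refine ⟨?_, ?_, expanded_derives, ?_, ?_⟩
  · rintro C u p (hC | ⟨r, w', hw', -, ⟨⟩⟩)
    exacts [hinv.queue_derives _ _ _ hC.1, .step r w' fun i => expanded_derives _ _ (hw' i)]
  · rintro C u p (hC | ⟨r, w', -, -, ⟨⟩⟩)
    exacts [hinv.queue_priority _ _ _ hC.1, hpr r w']
  · intro C v (hC : Function.update S B (some w) C = some v)
    obtain ⟨rfl, rfl⟩ | hC := Function.update_eq_some_cases hC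
    exacts [hinv.eq_ell_of_isMin hfin hg hmono hpr hmem hmin hnew, hinv.expanded_eq_ell _ _ hC]
  · intro r w' hw'
    by_cases hB : ∃ i, P.ant r i = B
    · exact .inr ⟨_, _, .inr ⟨r, w', hw', hB, rfl⟩, le_rfl⟩
    have hold : ∀ i, S (P.ant r i) = some (w' i) := fun i =>
      (Function.update_of_ne (fun hi => hB ⟨i, hi⟩) _ _).symm.trans (hw' i)
    obtain hC | ⟨u, p, hC, hp⟩ := hinv.rule_covered r w' hold
    · exact .inl (expanded_of_old _ (.inr hC))
    obtain hC' | hCB := Set.mem_diff_singleton_or_fst_eq (y := (B, w, q)) hC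
    exacts [.inr ⟨u, p, .inl hC', hp⟩, .inl (expanded_of_old _ (.inl hCB))]

theorem step (hfin : ∀ B, h B ≠ ⊤) (hg : ∀ r, Monotone (P.g r))
    (hmono : P.MonotoneHeuristic h) (hpr : ∀ r w, P.pr r w = P.g r w + h (P.concl r))
    {s' : P.State} (hinv : AstarInv P h s) (hs : P.Step s s') : AstarInv P h s' := by
  cases hs with
  | skip _ _ _ _ _ _ _ hold => exact hinv.skip hold
  | expand _ _ _ _ _ hmem hmin hnew => exact hinv.expand hfin hg hmono hpr hmem hmin hnew

theorem of_reaches (hfin : ∀ B, h B ≠ ⊤) (hg : ∀ r, Monotone (P.g r))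
    (hmono : P.MonotoneHeuristic h) (hpr : ∀ r w, P.pr r w = P.g r w + h (P.concl r))
    (hs : P.Reaches s) : AstarInv P h s := by
  induction hs with
  | init => exact init hpr
  | step _ _ _ hstep hinv => exact hinv.step hfin hg hmono hpr hstep

end AstarInv

end PLDP

theorem astar_expanded_weights_are_lightest_general (P : PLDP)
    (h : P.Stmt → ℝ≥0∞) (hfin : ∀ B, h B ≠ ⊤)
    (hg : ∀ r : P.Rule, Monotone (P.g r))
    (hmono : P.MonotoneHeuristic h)
    (hpr : ∀ (r : P.Rule) (w : Fin (P.n r) → ℝ≥0∞),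
      P.pr r w = P.g r w + h (P.concl r)) :
    ∀ s : P.State, P.Reaches s → ∀ (B : P.Stmt) (w : ℝ≥0∞),
      s.1 B = some w → w = P.ell B :=
  fun _s hs B w hB => (PLDP.AstarInv.of_reaches hfin hg hmono hpr hs).expanded_eq_ell B w hB

/-- During the execution of the prioritized rules `A(R)` of A*
lightest derivation (each rule prioritized at `g(w_1,...,w_n) + h(C)`) with a
monotone finite-valued heuristic `h` and non-decreasing weight functions,
every weight assignment `(B = w)` that enters `S` satisfies `w = ℓ(B,R)`. -/
theorem astar_expanded_weights_are_lightest (P : PLDP) [Finite P.Rule]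
    (h : P.Stmt → ℝ≥0∞) (hfin : ∀ B, h B ≠ ⊤)
    (hg : ∀ r : P.Rule, Monotone (P.g r))
    (hmono : P.MonotoneHeuristic h)
    (hpr : ∀ (r : P.Rule) (w : Fin (P.n r) → ℝ≥0∞),
      P.pr r w = P.g r w + h (P.concl r)) :
    ∀ s : P.State, P.Reaches s → ∀ (B : P.Stmt) (w : ℝ≥0∞),
      s.1 B = some w → w = P.ell B :=
  astar_expanded_weights_are_lightest_general P h hfin hg hmono hpr
end

section
/- During the execution of A*LD with a monotone heuristic h, statements are expanded in non-decreasing order of their figure of merit ℓ(B,R) + h(B); equivalently, the minimum priority of the queue never decreases over the run. -/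
open scoped ENNReal

attribute [local instance] Classical.propDecidable

/-!
While the queue is popped in priority order, an invariant holds: `S` records optimal weights,
every queued item `(C, u, p)` has a derivation of weight `u` and priority `p = u + h C`, and every
rule whose antecedents all lie in `S` has its conclusion in `S` or queued at a weight no larger
than the rule's. Monotonicity of `h` then shows that a derivation of weight `v` of a statement `C`
not in `S` has a queued item of priority at most `v + h C` on its frontier. Hence the popped item
of an expansion carries the optimal weight, so its priority is the merit `ℓ(B) + h(B)`, and the
items it creates have priority at least that merit; the minimum priority of the queue never
decreases.
-/

namespace PLDP

noncomputable def minPriority {α β : Type*} (Q : Set (α × β × ℝ≥0∞)) : ℝ≥0∞ :=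
  sInf {q | ∃ B w, (B, w, q) ∈ Q}

section minPriority

variable {α β : Type*} {Q Q' : Set (α × β × ℝ≥0∞)} {B : α} {w : β} {q : ℝ≥0∞}

theorem minPriority_le_of_mem (hmem : (B, w, q) ∈ Q) : minPriority Q ≤ q :=
  sInf_le ⟨B, w, hmem⟩

theorem le_minPriority (hle : ∀ x ∈ Q, q ≤ x.2.2) : q ≤ minPriority Q :=
  le_sInf fun _ ⟨B, w, hmem⟩ => hle (B, w, _) hmem

theorem minPriority_eq_of_mem_of_forall_le (hmem : (B, w, q) ∈ Q) (hle : ∀ x ∈ Q, q ≤ x.2.2) :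
    minPriority Q = q :=
  (minPriority_le_of_mem hmem).antisymm (le_minPriority hle)

theorem minPriority_mono (hQ : Q' ⊆ Q) : minPriority Q ≤ minPriority Q' :=
  sInf_le_sInf fun _ ⟨B, w, hmem⟩ => ⟨B, w, hQ hmem⟩

end minPriority

variable {P : PLDP} {h : P.Stmt → ℝ≥0∞}

theorem ell_eq_of_isLeast {B : P.Stmt} {w : ℝ≥0∞} (hw : IsLeast {v | P.Derives B v} w) :
    P.ell B = w :=
  hw.csInf_eq

structure IsAStar (P : PLDP) (h : P.Stmt → ℝ≥0∞) : Prop where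
  heuristic_ne_top : ∀ B, h B ≠ ⊤
  g_monotone : ∀ r, Monotone (P.g r)
  monotoneHeuristic : P.MonotoneHeuristic h
  pr_eq : ∀ r w, P.pr r w = P.g r w + h (P.concl r)

structure AStarInvariant (P : PLDP) (h : P.Stmt → ℝ≥0∞) (s : P.State) : Prop where
  expanded_isLeast : ∀ C u, s.1 C = some u → IsLeast {v | P.Derives C v} u
  queued_derives : ∀ x ∈ s.2, P.Derives x.1 x.2.1
  queued_priority : ∀ x ∈ s.2, x.2.2 = x.2.1 + h x.1
  rule_closed : ∀ (r : P.Rule) (w : Fin (P.n r) → ℝ≥0∞),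
    (∀ i, s.1 (P.ant r i) = some (w i)) →
    s.1 (P.concl r) ≠ none ∨ ∃ u ≤ P.g r w, (P.concl r, u, u + h (P.concl r)) ∈ s.2

namespace AStarInvariant

variable {s : P.State}

theorem exists_mem_queue_le (hg : ∀ r, Monotone (P.g r)) (hmono : P.MonotoneHeuristic h)
    (hinv : P.AStarInvariant h s) {C : P.Stmt} {v : ℝ≥0∞} (hd : P.Derives C v)
    (hC : s.1 C = none) : ∃ x ∈ s.2, x.2.2 ≤ v + h C := by
  induction hd with
  | step r w hd ih =>
    by_cases hall : ∀ i, s.1 (P.ant r i) ≠ none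
    · choose u hu using fun i => Option.ne_none_iff_exists'.mp (hall i)
      have hle : u ≤ w := fun i => (hinv.expanded_isLeast _ _ (hu i)).2 (hd i)
      obtain hS | ⟨u', hu'le, hmem⟩ := hinv.rule_closed r u hu
      · exact absurd hC hS
      · exact ⟨_, hmem, add_le_add_left (hu'le.trans (hg r hle)) _⟩
    · push Not at hall
      obtain ⟨i, hi⟩ := hall
      obtain ⟨x, hx, hxle⟩ := ih i hi
      exact ⟨x, hx, hxle.trans (hmono r w hd i)⟩

theorem isLeast_of_pop (hfin : ∀ B, h B ≠ ⊤) (hg : ∀ r, Monotone (P.g r))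
    (hmono : P.MonotoneHeuristic h) {S : P.Stmt → Option ℝ≥0∞}
    {Q : Set (P.Stmt × ℝ≥0∞ × ℝ≥0∞)} (hinv : P.AStarInvariant h (S, Q)) {B : P.Stmt}
    {w q : ℝ≥0∞} (hmem : (B, w, q) ∈ Q) (hmin : ∀ x ∈ Q, q ≤ x.2.2) (hnew : S B = none) :
    IsLeast {v | P.Derives B v} w := by
  refine ⟨hinv.queued_derives _ hmem, fun v hv => ?_⟩
  obtain ⟨x, hx, hxle⟩ := hinv.exists_mem_queue_le hg hmono hv hnew
  have hq : q = w + h B := hinv.queued_priority _ hmem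
  rw [← ENNReal.add_le_add_iff_right (hfin B), ← hq]
  exact (hmin x hx).trans hxle

theorem rule_closed_expand {S : P.Stmt → Option ℝ≥0∞} {Q : Set (P.Stmt × ℝ≥0∞ × ℝ≥0∞)}
    (hpr : ∀ r w, P.pr r w = P.g r w + h (P.concl r)) (hinv : P.AStarInvariant h (S, Q))
    (B : P.Stmt) (w q : ℝ≥0∞) (r : P.Rule) (w' : Fin (P.n r) → ℝ≥0∞)
    (hw' : ∀ i, Function.update S B (some w) (P.ant r i) = some (w' i)) :
    Function.update S B (some w) (P.concl r) ≠ none ∨ ∃ u ≤ P.g r w',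
      (P.concl r, u, u + h (P.concl r)) ∈
        (Q \ {(B, w, q)}) ∪ P.newItems (Function.update S B (some w)) B := by
  by_cases hB : ∃ i, P.ant r i = B
  · exact Or.inr ⟨_, le_rfl, Or.inr ⟨r, w', hw', hB, by rw [hpr]⟩⟩
  by_cases hcB : P.concl r = B
  · left
    simp [hcB]
  push Not at hB
  have hS : ∀ i, S (P.ant r i) = some (w' i) := fun i => by
    rw [← hw' i, Function.update_of_ne (hB i)]
  obtain hS | ⟨u, hle, hmem⟩ := hinv.rule_closed r w' hS
  · left
    rwa [Function.update_of_ne hcB]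
  · exact Or.inr ⟨u, hle, Or.inl ⟨hmem, fun he => hcB (Prod.ext_iff.mp he).1⟩⟩

theorem expand (hA : P.IsAStar h) {S : P.Stmt → Option ℝ≥0∞} {Q : Set (P.Stmt × ℝ≥0∞ × ℝ≥0∞)}
    (hinv : P.AStarInvariant h (S, Q)) {B : P.Stmt} {w q : ℝ≥0∞} (hmem : (B, w, q) ∈ Q)
    (hmin : ∀ x ∈ Q, q ≤ x.2.2) (hnew : S B = none) :
    P.AStarInvariant h (Function.update S B (some w),
      (Q \ {(B, w, q)}) ∪ P.newItems (Function.update S B (some w)) B) := by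
  have hopt : ∀ C u, Function.update S B (some w) C = some u →
      IsLeast {v | P.Derives C v} u := by
    intro C u hC
    by_cases hCB : C = B
    · subst hCB
      obtain rfl : w = u := Option.some_injective _ (by simpa using hC)
      exact hinv.isLeast_of_pop hA.heuristic_ne_top hA.g_monotone hA.monotoneHeuristic
        hmem hmin hnew
    · rw [Function.update_of_ne hCB] at hC
      exact hinv.expanded_isLeast C u hC
  refine ⟨hopt, ?_, ?_, hinv.rule_closed_expand hA.pr_eq B w q⟩
  · rintro x (⟨hx, -⟩ | ⟨r, w', hant, -, rfl⟩)
    · exact hinv.queued_derives x hx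
    · exact .step r w' fun i => (hopt _ _ (hant i)).1
  · rintro x (⟨hx, -⟩ | ⟨r, w', -, -, rfl⟩)
    · exact hinv.queued_priority x hx
    · exact hA.pr_eq r w'

theorem step (hA : P.IsAStar h) {s s' : P.State} (hinv : P.AStarInvariant h s)
    (hs : P.Step s s') : P.AStarInvariant h s' := by
  cases hs with
  | skip S Q B w q hmem hmin hold =>
    refine ⟨hinv.expanded_isLeast, fun x hx => hinv.queued_derives x hx.1,
      fun x hx => hinv.queued_priority x hx.1, fun r w' hw' => ?_⟩
    obtain hS | ⟨u, hle, hmemQ⟩ := hinv.rule_closed r w' hw'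
    · exact Or.inl hS
    · by_cases he : (P.concl r, u, u + h (P.concl r)) = (B, w, q)
      · left
        rwa [show P.concl r = B from congrArg Prod.fst he]
      · exact Or.inr ⟨u, hle, hmemQ, he⟩
  | expand S Q B w q hmem hmin hnew => exact hinv.expand hA hmem hmin hnew

theorem le_priority_newItems (hmono : P.MonotoneHeuristic h)
    (hpr : ∀ r w, P.pr r w = P.g r w + h (P.concl r)) {S : P.Stmt → Option ℝ≥0∞}
    {Q : Set (P.Stmt × ℝ≥0∞ × ℝ≥0∞)} (hinv : P.AStarInvariant h (S, Q)) {B : P.Stmt}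
    {w q : ℝ≥0∞} (hmem : (B, w, q) ∈ Q)
    (hder : ∀ C u, Function.update S B (some w) C = some u → P.Derives C u) :
    ∀ x ∈ P.newItems (Function.update S B (some w)) B, q ≤ x.2.2 := by
  rintro x ⟨r, w', hant, ⟨i, rfl⟩, rfl⟩
  have hwi : w' i = w := Option.some_injective _ (by simpa using (hant i).symm)
  have hq : q = w + h (P.ant r i) := hinv.queued_priority _ hmem
  simpa [hq, hwi, hpr] using hmono r w' (fun j => hder _ _ (hant j)) i

theorem minPriority_le_step (hA : P.IsAStar h) {s s' : P.State}
    (hinv : P.AStarInvariant h s) (hs : P.Step s s') : minPriority s.2 ≤ minPriority s'.2 := by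
  cases hs with
  | skip => exact minPriority_mono Set.sdiff_subset
  | expand S Q B w q hmem hmin hnew =>
    have hinv' := hinv.expand hA hmem hmin hnew
    refine (minPriority_le_of_mem hmem).trans (le_minPriority ?_)
    rintro x (⟨hx, -⟩ | hx)
    · exact hmin x hx
    · exact hinv.le_priority_newItems hA.monotoneHeuristic hA.pr_eq hmem
        (fun C u hC => (hinv'.expanded_isLeast C u hC).1) x hx

end AStarInvariant

theorem astarInvariant_init (hpr : ∀ r w, P.pr r w = P.g r w + h (P.concl r)) :
    P.AStarInvariant h P.init where
  expanded_isLeast _ _ hC := by simp [init] at hC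
  queued_derives := by
    rintro x ⟨r, hn, w, rfl⟩
    exact .step r w fun i => absurd i.2 (by omega)
  queued_priority := by
    rintro x ⟨r, -, w, rfl⟩
    exact hpr r w
  rule_closed r w hw := by
    by_cases hn : P.n r = 0
    · exact Or.inr ⟨_, le_rfl, r, hn, w, by rw [hpr]⟩
    · simpa [init] using hw ⟨0, Nat.pos_of_ne_zero hn⟩

theorem Reaches.astarInvariant (hA : P.IsAStar h) {s : P.State} (hr : P.Reaches s) :
    P.AStarInvariant h s := by
  induction hr with
  | init => exact astarInvariant_init hA.pr_eq
  | step _ _ _ hs ih => exact ih.step hA hs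

theorem Reaches.of_reflTransGen {s t : P.State} (hr : P.Reaches s)
    (hst : Relation.ReflTransGen P.Step s t) : P.Reaches t := by
  induction hst with
  | refl => exact hr
  | tail _ hbc ih => exact .step _ _ ih hbc

theorem Reaches.minPriority_le (hA : P.IsAStar h) {s t : P.State} (hr : P.Reaches s)
    (hst : Relation.ReflTransGen P.Step s t) : minPriority s.2 ≤ minPriority t.2 := by
  induction hst with
  | refl => exact le_rfl
  | tail hab hbc ih =>
    exact ih.trans (((hr.of_reflTransGen hab).astarInvariant hA).minPriority_le_step hA hbc)

theorem Reaches.merit_eq_minPriority (hA : P.IsAStar h) {s s' : P.State} {B : P.Stmt}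
    (hr : P.Reaches s) (hexp : P.StepExpands s s' B) :
    P.ell B + h B = minPriority s.2 := by
  obtain ⟨hs, hBnone, hBsome⟩ := hexp
  have hinv := hr.astarInvariant hA
  cases hs with
  | skip => exact absurd hBnone hBsome
  | expand S Q B₀ w q hmem hmin hnew =>
    obtain rfl : B = B₀ := by
      by_contra hne
      exact hBsome (by simpa [Function.update_of_ne hne] using hBnone)
    have hq : q = w + h B := hinv.queued_priority _ hmem
    rw [minPriority_eq_of_mem_of_forall_le hmem hmin, hq,
      ell_eq_of_isLeast (hinv.isLeast_of_pop hA.heuristic_ne_top hA.g_monotone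
        hA.monotoneHeuristic hmem hmin hnew)]

end PLDP

theorem astar_expands_in_merit_order_general (P : PLDP)
    (h : P.Stmt → ℝ≥0∞) (hfin : ∀ B, h B ≠ ⊤)
    (hg : ∀ r : P.Rule, Monotone (P.g r))
    (hmono : P.MonotoneHeuristic h)
    (hpr : ∀ (r : P.Rule) (w : Fin (P.n r) → ℝ≥0∞),
      P.pr r w = P.g r w + h (P.concl r)) :
    -- the minimum priority of the queue never decreases
    (∀ s s' : P.State, P.Reaches s → P.Step s s' →
      sInf {q | ∃ B w, (B, w, q) ∈ s.2} ≤ sInf {q | ∃ B w, (B, w, q) ∈ s'.2}) ∧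
    -- statements are expanded in non-decreasing order of figure of merit
    (∀ (s s' : P.State) (B : P.Stmt), P.Reaches s → P.StepExpands s s' B →
      ∀ (t t' : P.State) (B' : P.Stmt), Relation.ReflTransGen P.Step s' t →
        P.StepExpands t t' B' → P.ell B + h B ≤ P.ell B' + h B') := by
  have hA : P.IsAStar h := ⟨hfin, hg, hmono, hpr⟩
  refine ⟨fun s s' hr hs => hr.minPriority_le hA (.single hs), ?_⟩
  intro s s' B hr hexp t t' B' hs't hexp'
  have hst : Relation.ReflTransGen P.Step s t := .head hexp.1 hs't
  rw [hr.merit_eq_minPriority hA hexp,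
    (hr.of_reflTransGen hst).merit_eq_minPriority hA hexp']
  exact hr.minPriority_le hA hst

/-- During the execution of A*LD with a monotone finite-valued
heuristic `h` (rules prioritized at `g(w_1,...,w_n) + h(C)`), statements are
expanded in non-decreasing order of their figure of merit `ℓ(B,R) + h(B)`;
equivalently, the minimum priority of the queue never decreases over the
run. -/
theorem astar_expands_in_merit_order (P : PLDP) [Finite P.Rule]
    (h : P.Stmt → ℝ≥0∞) (hfin : ∀ B, h B ≠ ⊤)
    (hg : ∀ r : P.Rule, Monotone (P.g r))
    (hmono : P.MonotoneHeuristic h)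
    (hpr : ∀ (r : P.Rule) (w : Fin (P.n r) → ℝ≥0∞),
      P.pr r w = P.g r w + h (P.concl r)) :
    -- the minimum priority of the queue never decreases
    (∀ s s' : P.State, P.Reaches s → P.Step s s' →
      sInf {q | ∃ B w, (B, w, q) ∈ s.2} ≤ sInf {q | ∃ B w, (B, w, q) ∈ s'.2}) ∧
    -- statements are expanded in non-decreasing order of figure of merit
    (∀ (s s' : P.State) (B : P.Stmt), P.Reaches s → P.StepExpands s s' B →
      ∀ (t t' : P.State) (B' : P.Stmt), Relation.ReflTransGen P.Step s' t →
        P.StepExpands t t' B' → P.ell B + h B ≤ P.ell B' + h B') :=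
  astar_expands_in_merit_order_general P h hfin hg hmono hpr
end

section
/- The execution of a finite set of prioritized rules P terminates and derives every statement that is derivable using the rules in P: upon termination, every derivable statement has a weight assigned in S. -/
open scoped ENNReal

attribute [local instance] Classical.propDecidable

/-! Each step either shrinks the queue or gives a weight to the conclusion of
some rule that had none, while an expansion queues at most one item per rule;
so the pair (rules with unweighted conclusion, queue size) decreases
lexicographically. Throughout, every rule whose antecedents are all weighted
has its conclusion queued or weighted. At termination the queue is empty, so
the weighted statements are closed under the rules and contain every derivable
one. -/

namespace PLDP

variable {P : PLDP}

/-- One queue item per rule, which bounds what a single expansion can add. The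
junk weight `0` of an unassigned antecedent never matters, see `firing_eq`. -/
noncomputable def firing (P : PLDP) (S : P.Stmt → Option ℝ≥0∞) (r : P.Rule) :
    P.Stmt × ℝ≥0∞ × ℝ≥0∞ :=
  let w := fun i => (S (P.ant r i)).getD 0
  (P.concl r, P.g r w, P.pr r w)

lemma firing_eq {S : P.Stmt → Option ℝ≥0∞} {r : P.Rule} {w : Fin (P.n r) → ℝ≥0∞}
    (hw : ∀ i, S (P.ant r i) = some (w i)) :
    P.firing S r = (P.concl r, P.g r w, P.pr r w) := by
  have hw' : (fun i => (S (P.ant r i)).getD 0) = w := funext fun i => by simp [hw i]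
  simp only [firing, hw']

lemma initQ_subset_range_firing (S : P.Stmt → Option ℝ≥0∞) :
    P.initQ ⊆ Set.range (P.firing S) := by
  rintro _ ⟨r, h0, w, rfl⟩
  exact ⟨r, firing_eq fun i => absurd i.isLt (by omega)⟩

lemma newItems_subset_range_firing (S : P.Stmt → Option ℝ≥0∞) (B : P.Stmt) :
    P.newItems S B ⊆ Set.range (P.firing S) := by
  rintro _ ⟨r, w, hw, -, rfl⟩
  exact ⟨r, firing_eq hw⟩

def Covered (s : P.State) (C : P.Stmt) : Prop :=
  (∃ w q, (C, w, q) ∈ s.2) ∨ s.1 C ≠ none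

def RuleClosed (s : P.State) : Prop :=
  ∀ (r : P.Rule) (w : Fin (P.n r) → ℝ≥0∞),
    (∀ i, s.1 (P.ant r i) = some (w i)) → Covered s (P.concl r)

structure Invariant (s : P.State) : Prop where
  queue_finite : s.2.Finite
  queue_subset_concl : ∀ x ∈ s.2, x.1 ∈ Set.range P.concl
  ruleClosed : RuleClosed s

/-- A removed item `(B, w, q)` is harmless: either `B` already had a weight,
or it receives one now. -/
lemma Step.covered {s s' : P.State} (hs : P.Step s s') {C : P.Stmt}
    (hC : Covered s C) : Covered s' C := by
  cases hs with
  | skip S Q B w q _ _ hold =>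
    rcases hC with ⟨w', q', hmem⟩ | hC
    · by_cases heq : (C, w', q') = (B, w, q)
      · obtain rfl : C = B := congrArg Prod.fst heq
        exact Or.inr hold
      · exact Or.inl ⟨w', q', hmem, heq⟩
    · exact Or.inr hC
  | expand S Q B w q _ _ _ =>
    by_cases hCB : C = B
    · subst hCB
      exact Or.inr (by simp)
    · rcases hC with ⟨w', q', hmem⟩ | hC
      · exact Or.inl ⟨w', q', Or.inl ⟨hmem, fun h => hCB (congrArg Prod.fst h)⟩⟩
      · exact Or.inr (by simpa [Function.update_of_ne hCB] using hC)

lemma Step.ruleClosed {s s' : P.State} (hs : P.Step s s') (hcl : RuleClosed s) :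
    RuleClosed s' := by
  have hcov : ∀ {C}, Covered s C → Covered s' C := hs.covered
  cases hs with
  | skip => exact fun r w hw => hcov (hcl r w hw)
  | expand S Q B w q _ _ _ =>
    intro r v hv
    by_cases hB : ∃ i, P.ant r i = B
    · exact Or.inl ⟨P.g r v, P.pr r v, Or.inr ⟨r, v, hv, hB, rfl⟩⟩
    · refine hcov (hcl r v fun i => ?_)
      simpa [Function.update_of_ne fun h => hB ⟨i, h⟩] using hv i

lemma invariant_init [Finite P.Rule] : Invariant P.init where
  queue_finite := (Set.finite_range _).subset (initQ_subset_range_firing fun _ => none)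
  queue_subset_concl := by
    rintro _ ⟨r, -, -, rfl⟩
    exact ⟨r, rfl⟩
  ruleClosed r w hw := by
    by_cases h0 : P.n r = 0
    · exact Or.inl ⟨P.g r w, P.pr r w, r, h0, w, rfl⟩
    · exact absurd (hw ⟨0, Nat.pos_of_ne_zero h0⟩) (by simp [init])

lemma Invariant.step [Finite P.Rule] {s s' : P.State} (h : Invariant s)
    (hs : P.Step s s') : Invariant s' where
  queue_finite := by
    cases hs with
    | skip => exact h.queue_finite.sdiff
    | expand S Q B w =>
      exact h.queue_finite.sdiff.union
        ((Set.finite_range _).subset (newItems_subset_range_firing _ B))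
  queue_subset_concl := by
    cases hs with
    | skip => exact fun x hx => h.queue_subset_concl x hx.1
    | expand =>
      rintro x (hx | ⟨r, -, -, -, rfl⟩)
      · exact h.queue_subset_concl x hx.1
      · exact ⟨r, rfl⟩
  ruleClosed := hs.ruleClosed h.ruleClosed

lemma Reaches.invariant [Finite P.Rule] {s : P.State} (h : P.Reaches s) :
    Invariant s := by
  induction h with
  | init => exact invariant_init
  | step _ _ _ hs ih => exact ih.step hs

noncomputable def measure (s : P.State) : ℕ ×ₗ ℕ :=
  toLex ({r : P.Rule | s.1 (P.concl r) = none}.ncard, s.2.ncard)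

/-- Expanding `B` assigns a weight to a conclusion (`B` is one, by the
invariant) and skipping shrinks the queue. -/
lemma Invariant.measure_lt [Finite P.Rule] {s s' : P.State} (h : Invariant s)
    (hs : P.Step s s') : measure s' < measure s := by
  cases hs with
  | skip S Q B w q hmem =>
    exact Prod.Lex.toLex_lt_toLex.2
      (Or.inr ⟨rfl, Set.ncard_sdiff_singleton_lt_of_mem hmem h.queue_finite⟩)
  | expand S Q B w q hmem _ hnew =>
    obtain ⟨r₀, hr₀⟩ := h.queue_subset_concl _ hmem
    refine Prod.Lex.toLex_lt_toLex.2 (Or.inl (Set.ncard_lt_ncard ⟨fun r hr => ?_, ?_⟩))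
    · by_cases hrB : P.concl r = B
      · simp [hrB] at hr
      · simpa [Function.update_of_ne hrB] using hr
    · intro hsub
      have hr₀' := hsub (show S (P.concl r₀) = none from hr₀ ▸ hnew)
      simp [hr₀] at hr₀'

lemma queue_eq_empty_of_terminal {s : P.State} (hfin : s.2.Finite)
    (hterm : ∀ s', ¬ P.Step s s') : s.2 = ∅ := by
  obtain ⟨S, Q⟩ := s
  by_contra hne
  obtain ⟨⟨B, w, q⟩, hmem, hmin⟩ :=
    Set.exists_min_image Q (fun x => x.2.2) hfin (Set.nonempty_iff_ne_empty.2 hne)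
  by_cases hS : S B = none
  · exact hterm _ (.expand S Q B w q hmem hmin hS)
  · exact hterm _ (.skip S Q B w q hmem hmin hS)

lemma RuleClosed.assigned_of_derives {s : P.State} (hcl : RuleClosed s) (hQ : s.2 = ∅)
    {B : P.Stmt} {w : ℝ≥0∞} (hB : P.Derives B w) : ∃ w', s.1 B = some w' := by
  induction hB with
  | step r _ _ ih =>
    choose u hu using ih
    rcases hcl r u hu with ⟨_, _, hmem⟩ | hassigned
    · simp [hQ] at hmem
    · exact Option.ne_none_iff_exists'.1 hassigned

end PLDP

/-- The execution of a finite set of prioritized rules `P`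
terminates (there is no infinite execution sequence) and derives every
statement that is derivable using the rules in `P`: upon termination (when the
queue is empty and no step applies), every derivable statement has a weight
assigned in `S`. -/
theorem execution_terminates_and_complete (P : PLDP) [Finite P.Rule] :
    -- termination: there is no infinite execution sequence from the initial state
    (¬ ∃ f : ℕ → P.State, f 0 = P.init ∧ ∀ k, P.Step (f k) (f (k + 1))) ∧
    -- completeness: at a terminal reachable state, every derivable statement
    -- has an assigned weight in S
    (∀ s : P.State, P.Reaches s → (∀ s', ¬ P.Step s s') →
      ∀ (B : P.Stmt) (w : ℝ≥0∞), P.Derives B w → ∃ w', s.1 B = some w') := by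
  refine ⟨?_, fun s hs hterm B w hB => ?_⟩
  · rintro ⟨f, hf0, hf⟩
    have hreach : ∀ k, P.Reaches (f k) := fun k => by
      induction k with
      | zero => exact hf0 ▸ .init
      | succ k ih => exact .step _ _ ih (hf k)
    obtain ⟨k, hk⟩ :=
      WellFounded.not_rel_apply_succ (r := (· < ·)) fun k => PLDP.measure (f k)
    exact hk ((hreach k).invariant.measure_lt (hf k))
  · have hinv := hs.invariant
    have hQ := PLDP.queue_eq_empty_of_terminal hinv.queue_finite hterm
    exact hinv.ruleClosed.assigned_of_derives hQ hB
end

section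
/- For additive rules, for every statement B derivable in a context of the goal, ℓ(B,R) + ℓ(context(B),R) equals the infimum of the weights of derivations of goal that contain B as a sub-derivation conclusion. -/
/-!
A derivation of `goal` containing a subderivation of `B` is the same thing as a context for `B`
glued to a derivation of `B`, with weight the sum of the two. So the weights of such derivations
form the Minkowski sum of the context weights and the derivation weights of `B`, and in `ℝ≥0∞`
the infimum of a Minkowski sum is the sum of the infima, since `· + a` has the lower adjoint
`· - a`.
-/

open scoped ENNReal

namespace ALDP

/-- `DerivesWithSub P C wC A wA` : there is a derivation of `C` of weight `wC`
that contains a subderivation of `A` of weight `wA` (i.e. `A` appears in the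
derivation tree of `C`, and the subtree rooted at `A` has weight `wA`). -/
inductive DerivesWithSub (P : ALDP) : P.Stmt → ℝ≥0∞ → P.Stmt → ℝ≥0∞ → Prop
  | refl (C : P.Stmt) (w : ℝ≥0∞) (h : P.Derives C w) : DerivesWithSub P C w C w
  | step (r : P.Rule) (w : Fin (P.n r) → ℝ≥0∞) (i : Fin (P.n r))
      (A : P.Stmt) (wA : ℝ≥0∞)
      (hd : ∀ j, j ≠ i → P.Derives (P.ant r j) (w j))
      (hsub : DerivesWithSub P (P.ant r i) (w i) A wA) :
      DerivesWithSub P (P.concl r) (P.v r + ∑ j, w j) A wA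

end ALDP

open scoped Pointwise in
theorem sInf_add_of_orderedSub {M : Type*} [CompleteLattice M] [AddCommSemigroup M] [Sub M]
    [OrderedSub M] (s t : Set M) : sInf (s + t) = sInf s + sInf t :=
  sInf_image2_eq_sInf_sInf (fun _ _ _ => tsub_le_iff_right) fun _ _ _ => tsub_le_iff_left

namespace ALDP

variable {P : ALDP}

theorem CtxDerives.trans {goal D A : P.Stmt} {u u' : ℝ≥0∞}
    (h₁ : P.CtxDerives goal D u) (h₂ : P.CtxDerives D A u') :
    P.CtxDerives goal A (u + u') := by
  induction h₂ with
  | base => simpa using h₁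
  | step r i u₀ w _ hd ih => simpa [add_assoc] using CtxDerives.step r i (u + u₀) w ih hd

theorem ctxDerives_concl_ant (r : P.Rule) (i : Fin (P.n r)) {w : Fin (P.n r) → ℝ≥0∞}
    (hd : ∀ j, j ≠ i → P.Derives (P.ant r j) (w j)) :
    P.CtxDerives (P.concl r) (P.ant r i) (P.v r + ∑ j ∈ Finset.univ.erase i, w j) := by
  simpa using CtxDerives.step r i 0 w CtxDerives.base hd

theorem DerivesWithSub.exists_ctxDerives {C A : P.Stmt} {W wA : ℝ≥0∞}
    (h : P.DerivesWithSub C W A wA) :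
    P.Derives A wA ∧ ∃ u, P.CtxDerives C A u ∧ u + wA = W := by
  induction h with
  | refl C w hC => exact ⟨hC, 0, CtxDerives.base, zero_add w⟩
  | step r w i A wA hd _ ih =>
    obtain ⟨hA, u, hc, hu⟩ := ih
    refine ⟨hA, _, (ctxDerives_concl_ant r i hd).trans hc, ?_⟩
    rw [← Finset.add_sum_erase _ _ (Finset.mem_univ i), ← hu]
    ring

theorem CtxDerives.derivesWithSub {goal B A : P.Stmt} {u wB wA : ℝ≥0∞}
    (hc : P.CtxDerives goal B u) (hd : P.DerivesWithSub B wB A wA) :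
    P.DerivesWithSub goal (u + wB) A wA := by
  induction hc generalizing wB with
  | base => simpa using hd
  | step r i u₀ w _ hder ih =>
    classical
    have hfill : P.DerivesWithSub (P.concl r) (P.v r + ∑ j, Function.update w i wB j) A wA :=
      .step r _ i A wA (fun j hj => by simpa [hj] using hder j hj) (by simpa using hd)
    rw [Finset.sum_update_of_mem (Finset.mem_univ i), Finset.sdiff_singleton_eq_erase] at hfill
    convert ih hfill using 1
    ring

open scoped Pointwise in
theorem setOf_derivesWithSub_eq_add (goal B : P.Stmt) :
    {W | ∃ w, P.DerivesWithSub goal W B w} = {u | P.CtxDerives goal B u} + {w | P.Derives B w} := by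
  ext W
  simp only [Set.mem_ofPred_eq, Set.mem_add]
  constructor
  · rintro ⟨w, h⟩
    obtain ⟨hB, u, hc, rfl⟩ := h.exists_ctxDerives
    exact ⟨u, hc, w, hB, rfl⟩
  · rintro ⟨u, hc, w, hB, rfl⟩
    exact ⟨w, hc.derivesWithSub (.refl B w hB)⟩

end ALDP

theorem ell_add_ellCtx_eq_inf_general (P : ALDP) (goal : P.Stmt) (B : P.Stmt) :
    P.ell B + P.ellCtx goal B =
      sInf {W | ∃ w, P.DerivesWithSub goal W B w} := by
  rw [ALDP.setOf_derivesWithSub_eq_add, sInf_add_of_orderedSub, add_comm]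
  rfl

/-- For additive rules, for every statement `B` that is derivable
and has a context of the goal, `ℓ(B,R) + ℓ(context(B),R)` equals the infimum
of the weights of derivations of `goal` that contain `B` as the conclusion of
a sub-derivation. -/
theorem ell_add_ellCtx_eq_inf (P : ALDP) (goal : P.Stmt) (B : P.Stmt)
    (hder : ∃ w, P.Derives B w) (hctx : ∃ u, P.CtxDerives goal B u) :
    P.ell B + P.ellCtx goal B =
      sInf {W | ∃ w, P.DerivesWithSub goal W B w} :=
  ell_add_ellCtx_eq_inf_general P goal B
end

section
/- Let R be a set of additive rules and c(R) the context rules. Then a statement B has a context of weight u (with respect to goal) if and only if context(B) is derivable with weight u using the rules R ∪ c(R); hence ℓ(context(B), R) as defined via context trees coincides with the lightest derivation weight of the statement context(B). -/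
open scoped ENNReal

open Classical in
/-- The problem `R ∪ c(R)`: statements are `Sum.inl B` for the original
statements `B` and `Sum.inr B` for the statements `context(B)`.  Rules are the
original rules of `R` (on `inl` statements), the axiom `→_0 context(goal)`,
and, for each rule `A_1,...,A_n →_v C` of `R` and each index `i`, the context
rule `context(C), A_1,...,A_{i-1},A_{i+1},...,A_n →_v context(A_i)` (here
represented with the antecedent `context(C)` placed at position `i`). -/
noncomputable def ALDP.withCtxRules (P : ALDP) (goal : P.Stmt) : ALDP where
  Stmt := P.Stmt ⊕ P.Stmt
  Rule := P.Rule ⊕ (Unit ⊕ (Σ r : P.Rule, Fin (P.n r)))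
  n := fun r => match r with
    | .inl r => P.n r
    | .inr (.inl _) => 0
    | .inr (.inr ⟨r, _⟩) => P.n r
  ant := fun r => match r with
    | .inl r => fun i => .inl (P.ant r i)
    | .inr (.inl _) => Fin.elim0
    | .inr (.inr ⟨r, i⟩) => fun j => if j = i then .inr (P.concl r) else .inl (P.ant r j)
  concl := fun r => match r with
    | .inl r => .inl (P.concl r)
    | .inr (.inl _) => .inr goal
    | .inr (.inr ⟨r, i⟩) => .inr (P.ant r i)
  v := fun r => match r with
    | .inl r => P.v r
    | .inr (.inl _) => 0
    | .inr (.inr ⟨r, _⟩) => P.v r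

/-! A context tree for `B` is read top-down from `goal`: the axiom `→_0 context(goal)` is the empty
context, and the context rule for `(r, i)` extends a context for `concl r` through the `i`-th
antecedent of `r`, the other antecedents being derived by `R` alone. So context trees are the
derivations of `context(B)` in `R ∪ c(R)`, and both translations are inductions on the trees. -/

theorem add_sum_eq_add_add_sum_erase {M ι : Type*} [AddCommMonoid M] [Fintype ι] [DecidableEq ι]
    (v : M) (w : ι → M) (i : ι) :
    v + ∑ j, w j = w i + v + ∑ j ∈ Finset.univ.erase i, w j := by
  rw [← Finset.add_sum_erase _ _ (Finset.mem_univ i), add_left_comm, add_assoc]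

namespace ALDP

variable {P : ALDP} {goal : P.Stmt}

theorem Derives.step_of_eq (r : P.Rule) (w : Fin (P.n r) → ℝ≥0∞)
    (hd : ∀ i, P.Derives (P.ant r i) (w i)) {B : P.Stmt} {u : ℝ≥0∞} (hB : P.concl r = B)
    (hu : P.v r + ∑ i, w i = u) : P.Derives B u :=
  hB ▸ hu ▸ Derives.step r w hd

theorem CtxDerives.step_of_eq (r : P.Rule) (i : Fin (P.n r)) {u : ℝ≥0∞}
    {w : Fin (P.n r) → ℝ≥0∞} (hc : P.CtxDerives goal (P.concl r) u)
    (hd : ∀ j, j ≠ i → P.Derives (P.ant r j) (w j)) {u' : ℝ≥0∞}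
    (hu : u + P.v r + ∑ j ∈ Finset.univ.erase i, w j = u') : P.CtxDerives goal (P.ant r i) u' :=
  hu ▸ CtxDerives.step r i u w hc hd

theorem Derives.withCtxRules_inl {B : P.Stmt} {w : ℝ≥0∞} (h : P.Derives B w) :
    (P.withCtxRules goal).Derives (.inl B) w := by
  induction h with
  | step r w _ ih => exact Derives.step (P := P.withCtxRules goal) (.inl r) w ih

theorem CtxDerives.withCtxRules_inr {B : P.Stmt} {u : ℝ≥0∞} (h : P.CtxDerives goal B u) :
    (P.withCtxRules goal).Derives (.inr B) u := by
  induction h with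
  | base =>
    exact Derives.step_of_eq (P := P.withCtxRules goal) (.inr (.inl ())) Fin.elim0
      (fun i => i.elim0) rfl ((zero_add _).trans (Finset.sum_eq_zero fun i _ => i.elim0))
  | step r i u w _ hd ih =>
    have hant : ∀ j : Fin (P.n r), (P.withCtxRules goal).Derives
        ((P.withCtxRules goal).ant (.inr (.inr ⟨r, i⟩)) j) (if j = i then u else w j) := by
      intro j
      by_cases hj : j = i
      · simpa [withCtxRules, hj] using ih
      · simpa [withCtxRules, hj] using (hd j hj).withCtxRules_inl
    refine Derives.step_of_eq (P := P.withCtxRules goal) (.inr (.inr ⟨r, i⟩)) _ hant rfl ?_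
    change P.v r + ∑ j : Fin (P.n r), (if j = i then u else w j) = _
    rw [add_sum_eq_add_add_sum_erase, if_pos rfl,
      Finset.sum_congr rfl fun j hj => if_neg (Finset.ne_of_mem_erase hj)]

theorem Derives.of_withCtxRules {s : (P.withCtxRules goal).Stmt} {w : ℝ≥0∞}
    (h : (P.withCtxRules goal).Derives s w) :
    Sum.elim (fun B => P.Derives B w) (fun B => P.CtxDerives goal B w) s := by
  induction h with
  | step r w _ ih =>
    rcases r with r | r | ⟨r, i⟩
    · exact Derives.step r w ih
    · change P.CtxDerives goal goal (0 + ∑ i, w i)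
      rw [Finset.sum_eq_zero fun i _ => i.elim0, add_zero]
      exact CtxDerives.base
    · have hc : P.CtxDerives goal (P.concl r) (w i) := by
        simpa [withCtxRules] using ih i
      have hd : ∀ j, j ≠ i → P.Derives (P.ant r j) (w j) := fun j hj => by
        simpa [withCtxRules, hj] using ih j
      exact CtxDerives.step_of_eq r i hc hd (add_sum_eq_add_add_sum_erase (P.v r) w i).symm

theorem ctxDerives_iff_derives_withCtxRules (B : P.Stmt) (u : ℝ≥0∞) :
    P.CtxDerives goal B u ↔ (P.withCtxRules goal).Derives (.inr B) u :=
  ⟨CtxDerives.withCtxRules_inr, Derives.of_withCtxRules⟩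

end ALDP

/-- For additive rules `R` with context rules `c(R)`, a statement
`B` has a context of weight `u` (with respect to `goal`) if and only if
`context(B)` is derivable with weight `u` using the rules `R ∪ c(R)`; hence
`ℓ(context(B),R)` defined via context trees coincides with the lightest
derivation weight of the statement `context(B)`. -/
theorem ctx_iff_derivable_with_ctx_rules (P : ALDP) (goal : P.Stmt) :
    (∀ (B : P.Stmt) (u : ℝ≥0∞),
      P.CtxDerives goal B u ↔ (P.withCtxRules goal).Derives (.inr B) u) ∧
    ∀ B : P.Stmt, P.ellCtx goal B = (P.withCtxRules goal).ell (.inr B) :=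
  ⟨ALDP.ctxDerives_iff_derives_withCtxRules, fun B => by
    simp only [ALDP.ellCtx, ALDP.ell, ALDP.ctxDerives_iff_derives_withCtxRules]⟩
end

section
/- If h is a perfect heuristic for an additive lightest derivation problem, i.e., h(B) = ℓ(context(B),R) for all B, then every statement expanded by A*LD before goal is expanded appears in some lightest derivation of goal; equivalently, A*LD only expands statements B with ℓ(B,R) + ℓ(context(B),R) ≤ ℓ(goal,R). -/
open scoped ENNReal

attribute [local instance] Classical.propDecidable

namespace ALDP

variable (P : ALDP)

/-- A state of the A*LD execution: the set `S` of expanded weight assignments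
and the priority queue `Q` of pending weight assignments with priorities. -/
abbrev State := (P.Stmt → Option ℝ≥0∞) × Set (P.Stmt × ℝ≥0∞ × ℝ≥0∞)

/-- A*LD prioritizes each additive rule `A_1,...,A_n →_v C` at
`v + w_1 + ... + w_n + h(C)`. -/
noncomputable def prio (h : P.Stmt → ℝ≥0∞) (r : P.Rule)
    (w : Fin (P.n r) → ℝ≥0∞) : ℝ≥0∞ :=
  P.v r + (∑ i, w i) + h (P.concl r)

/-- The initial queue: assignments defined by rules with no antecedents. -/
def initQ (h : P.Stmt → ℝ≥0∞) : Set (P.Stmt × ℝ≥0∞ × ℝ≥0∞) :=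
  {x | ∃ (r : P.Rule) (_ : P.n r = 0) (w : Fin (P.n r) → ℝ≥0∞),
    x = (P.concl r, P.v r + ∑ i, w i, P.prio h r w)}

def init (h : P.Stmt → ℝ≥0∞) : P.State := (fun _ => none, P.initQ h)

/-- Assignments derivable in one rule step from `(B = ·)` and `S`. -/
noncomputable def newItems (h : P.Stmt → ℝ≥0∞) (S : P.Stmt → Option ℝ≥0∞)
    (B : P.Stmt) : Set (P.Stmt × ℝ≥0∞ × ℝ≥0∞) :=
  {x | ∃ (r : P.Rule) (w : Fin (P.n r) → ℝ≥0∞),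
      (∀ i, S (P.ant r i) = some (w i)) ∧ (∃ i, P.ant r i = B) ∧
      x = (P.concl r, P.v r + ∑ i, w i, P.prio h r w)}

/-- One iteration of the A*LD procedure. -/
inductive Step (h : P.Stmt → ℝ≥0∞) : P.State → P.State → Prop
  | skip (S : P.Stmt → Option ℝ≥0∞) (Q : Set (P.Stmt × ℝ≥0∞ × ℝ≥0∞))
      (B : P.Stmt) (w q : ℝ≥0∞)
      (hmem : (B, w, q) ∈ Q) (hmin : ∀ x ∈ Q, q ≤ x.2.2)
      (hold : S B ≠ none) :
      Step h (S, Q) (S, Q \ {(B, w, q)})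
  | expand (S : P.Stmt → Option ℝ≥0∞) (Q : Set (P.Stmt × ℝ≥0∞ × ℝ≥0∞))
      (B : P.Stmt) (w q : ℝ≥0∞)
      (hmem : (B, w, q) ∈ Q) (hmin : ∀ x ∈ Q, q ≤ x.2.2)
      (hnew : S B = none) :
      Step h (S, Q) (Function.update S B (some w),
        (Q \ {(B, w, q)}) ∪ P.newItems h (Function.update S B (some w)) B)

/-- The reachable states of the A*LD execution. -/
inductive Reaches (h : P.Stmt → ℝ≥0∞) : P.State → Prop
  | init : Reaches h (P.init h)
  | step (s s' : P.State) (hr : Reaches h s) (hs : P.Step h s s') :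
      Reaches h s'

end ALDP

/-!
A context of the conclusion of a rule, extended by that rule and by derivations of the other
antecedents, is a context of each antecedent; hence the perfect heuristic `ℓ(context(·), R)` is
monotone. For a monotone heuristic, A*LD keeps the usual invariant: every derivation of weight
`w` of a statement `C` that is not yet expanded passes through a queued item of priority at most
`w + h(C)`. So the priority `q = w + h(B)` of the item popped when `B` is expanded is at most
`ℓ(goal, R) + h(goal) = ℓ(goal, R)`, while `ℓ(B, R) ≤ w`.
-/

namespace ALDP

variable {P : ALDP}

lemma ellCtx_self (goal : P.Stmt) : P.ellCtx goal goal = 0 :=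
  le_antisymm (sInf_le CtxDerives.base) zero_le

lemma ellCtx_ant_le_s19 {goal : P.Stmt} (r : P.Rule) (w : Fin (P.n r) → ℝ≥0∞)
    (hd : ∀ j, P.Derives (P.ant r j) (w j)) (i : Fin (P.n r)) :
    P.ellCtx goal (P.ant r i) ≤
      P.ellCtx goal (P.concl r) + (P.v r + ∑ j ∈ Finset.univ.erase i, w j) := by
  rw [ellCtx, ellCtx, ENNReal.sInf_add]
  refine le_iInf₂ fun u hu => ?_
  rw [← add_assoc]
  exact sInf_le (CtxDerives.step r i u w hu fun j _ => hd j)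

theorem monotoneHeuristic_ellCtx (goal : P.Stmt) : P.MonotoneHeuristic (P.ellCtx goal) := by
  intro r w hd i
  calc w i + P.ellCtx goal (P.ant r i)
      ≤ w i + (P.ellCtx goal (P.concl r) + (P.v r + ∑ j ∈ Finset.univ.erase i, w j)) := by
        gcongr
        exact ellCtx_ant_le_s19 r w hd i
    _ = P.v r + (w i + ∑ j ∈ Finset.univ.erase i, w j) + P.ellCtx goal (P.concl r) := by ring
    _ = P.v r + (∑ j, w j) + P.ellCtx goal (P.concl r) := by
        rw [Finset.add_sum_erase _ _ (Finset.mem_univ i)]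

variable {h : P.Stmt → ℝ≥0∞}

structure Invariant (h : P.Stmt → ℝ≥0∞) (s : P.State) : Prop where
  derives : ∀ C u, s.1 C = some u → P.Derives C u
  /- Stated with `h C` added on both sides: when `h C = ⊤` nothing is known about `u`. -/
  optimal : ∀ C u, s.1 C = some u → ∀ w, P.Derives C w → u + h C ≤ w + h C
  queue_derives : ∀ x ∈ s.2, P.Derives x.1 x.2.1
  queue_prio : ∀ x ∈ s.2, x.2.2 = x.2.1 + h x.1
  queue_complete : ∀ (r : P.Rule) (u : Fin (P.n r) → ℝ≥0∞),
    (∀ i, s.1 (P.ant r i) = some (u i)) →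
      s.1 (P.concl r) ≠ none ∨ (P.concl r, P.v r + ∑ i, u i, P.prio h r u) ∈ s.2

namespace Invariant

variable {s : P.State}

lemma prio_le (hmono : P.MonotoneHeuristic h) (hinv : Invariant h s) (r : P.Rule)
    {u w : Fin (P.n r) → ℝ≥0∞} (hu : ∀ i, s.1 (P.ant r i) = some (u i))
    (hw : ∀ i, P.Derives (P.ant r i) (w i)) :
    P.prio h r u ≤ P.prio h r w := by
  rcases eq_or_ne (P.prio h r w) ⊤ with htop | htop
  · exact htop ▸ le_top
  have hfin : ∀ i, h (P.ant r i) ≠ ⊤ := fun i =>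
    ne_top_of_le_ne_top htop (le_add_self.trans (hmono r w hw i))
  have hle : ∀ i, u i ≤ w i := fun i =>
    (ENNReal.add_le_add_iff_right (hfin i)).mp (hinv.optimal _ _ (hu i) _ (hw i))
  unfold prio
  gcongr with i
  exact hle i

lemma exists_queue_le (hmono : P.MonotoneHeuristic h) (hinv : Invariant h s)
    {C : P.Stmt} {w : ℝ≥0∞} (hd : P.Derives C w) :
    s.1 C ≠ none ∨ ∃ x ∈ s.2, x.2.2 ≤ w + h C := by
  induction hd with
  | step r w hw ih =>
    by_cases hC : s.1 (P.concl r) ≠ none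
    · exact Or.inl hC
    push Not at hC
    right
    by_cases hall : ∀ i, s.1 (P.ant r i) ≠ none
    · choose u hu using fun i => Option.ne_none_iff_exists'.mp (hall i)
      obtain hC' | hmem := hinv.queue_complete r u hu
      · exact absurd hC hC'
      · exact ⟨_, hmem, hinv.prio_le hmono r hu hw⟩
    · push Not at hall
      obtain ⟨i, hi⟩ := hall
      obtain hi' | ⟨x, hx, hxle⟩ := ih i
      · exact absurd hi hi'
      · exact ⟨x, hx, hxle.trans (hmono r w hw i)⟩

lemma le_ell_add (hmono : P.MonotoneHeuristic h) (hinv : Invariant h s) {C : P.Stmt}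
    (hC : s.1 C = none) {q : ℝ≥0∞} (hmin : ∀ x ∈ s.2, q ≤ x.2.2) :
    q ≤ P.ell C + h C := by
  rw [ell, ENNReal.sInf_add]
  refine le_iInf₂ fun w hw => ?_
  obtain hC' | ⟨x, hx, hxle⟩ := hinv.exists_queue_le hmono hw
  · exact absurd hC hC'
  · exact (hmin x hx).trans hxle

lemma init : Invariant h (P.init h) where
  derives _ _ h := by simp [ALDP.init] at h
  optimal _ _ h := by simp [ALDP.init] at h
  queue_derives := by
    rintro _ ⟨r, hn, w, rfl⟩
    exact Derives.step r w fun i => (Fin.cast hn i).elim0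
  queue_prio := by
    rintro _ ⟨r, hn, w, rfl⟩
    rfl
  queue_complete r u hu := by
    rcases Nat.eq_zero_or_pos (P.n r) with hn | hn
    · exact Or.inr ⟨r, hn, u, rfl⟩
    · simpa [ALDP.init] using hu ⟨0, hn⟩

lemma skip {S : P.Stmt → Option ℝ≥0∞} {Q : Set (P.Stmt × ℝ≥0∞ × ℝ≥0∞)} {B : P.Stmt}
    {w q : ℝ≥0∞} (hinv : Invariant h (S, Q)) (hold : S B ≠ none) :
    Invariant h (S, Q \ {(B, w, q)}) where
  derives := hinv.derives
  optimal := hinv.optimal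
  queue_derives x hx := hinv.queue_derives x hx.1
  queue_prio x hx := hinv.queue_prio x hx.1
  queue_complete r u hu := by
    obtain hC | hmem := hinv.queue_complete r u hu
    · exact Or.inl hC
    by_cases heq : (P.concl r, P.v r + ∑ i, u i, P.prio h r u) = (B, w, q)
    · rw [Prod.mk.injEq] at heq
      exact Or.inl (by rw [heq.1]; exact hold)
    · exact Or.inr ⟨hmem, heq⟩

lemma derives_update {S : P.Stmt → Option ℝ≥0∞} {Q : Set (P.Stmt × ℝ≥0∞ × ℝ≥0∞)}
    {B : P.Stmt} {w : ℝ≥0∞} (hinv : Invariant h (S, Q)) (hB : P.Derives B w) :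
    ∀ C u, Function.update S B (some w) C = some u → P.Derives C u := by
  intro C u hC
  rcases eq_or_ne C B with rfl | hCB
  · rw [Function.update_self, Option.some_inj] at hC
    exact hC ▸ hB
  · rw [Function.update_of_ne hCB] at hC
    exact hinv.derives C u hC

lemma expand (hmono : P.MonotoneHeuristic h) {S : P.Stmt → Option ℝ≥0∞}
    {Q : Set (P.Stmt × ℝ≥0∞ × ℝ≥0∞)} {B : P.Stmt} {w q : ℝ≥0∞} (hinv : Invariant h (S, Q))
    (hmem : (B, w, q) ∈ Q) (hmin : ∀ x ∈ Q, q ≤ x.2.2) (hnew : S B = none) :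
    Invariant h (Function.update S B (some w),
      (Q \ {(B, w, q)}) ∪ P.newItems h (Function.update S B (some w)) B) := by
  have derives := hinv.derives_update (hinv.queue_derives _ hmem)
  refine ⟨derives, ?optimal, ?queue_derives, ?queue_prio, ?queue_complete⟩
  case optimal =>
    intro C u hC w' hw'
    dsimp only at hC
    rcases eq_or_ne C B with rfl | hCB
    · rw [Function.update_self, Option.some_inj] at hC
      subst hC
      calc w + h C = q := (hinv.queue_prio _ hmem).symm
        _ ≤ P.ell C + h C := hinv.le_ell_add hmono hnew hmin
        _ ≤ w' + h C := by gcongr; exact sInf_le hw'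
    · rw [Function.update_of_ne hCB] at hC
      exact hinv.optimal C u hC w' hw'
  case queue_derives =>
    rintro x (⟨hx, -⟩ | ⟨r, u, hu, -, rfl⟩)
    · exact hinv.queue_derives x hx
    · exact Derives.step r u fun i => derives _ _ (hu i)
  case queue_prio =>
    rintro x (⟨hx, -⟩ | ⟨r, u, -, -, rfl⟩)
    · exact hinv.queue_prio x hx
    · rfl
  case queue_complete =>
    intro r u hu
    rcases eq_or_ne (P.concl r) B with hcB | hcB
    · left
      simp [hcB]
    by_cases hant : ∃ i, P.ant r i = B
    · exact Or.inr (Or.inr ⟨r, u, hu, hant, rfl⟩)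
    push Not at hant
    have hu' : ∀ i, S (P.ant r i) = some (u i) := fun i => by
      simpa [Function.update_of_ne (hant i)] using hu i
    simp only [Function.update_of_ne hcB]
    refine (hinv.queue_complete r u hu').imp_right fun hmem' => Or.inl ⟨hmem', ?_⟩
    exact fun heq => hcB (congrArg Prod.fst heq)

lemma step (hmono : P.MonotoneHeuristic h) {s s' : P.State} (hinv : Invariant h s)
    (hs : P.Step h s s') : Invariant h s' := by
  cases hs with
  | skip _ _ _ _ _ _ _ hold => exact hinv.skip hold
  | expand _ _ _ _ _ hmem hmin hnew => exact hinv.expand hmono hmem hmin hnew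

end Invariant

lemma Reaches.invariant (hmono : P.MonotoneHeuristic h) {s : P.State} (hr : P.Reaches h s) :
    Invariant h s := by
  induction hr with
  | init => exact Invariant.init
  | step _ _ _ hs ih => exact ih.step hmono hs

end ALDP

theorem perfect_heuristic_expansions_general (P : ALDP)
    (goal : P.Stmt) (h : P.Stmt → ℝ≥0∞)
    (hperf : ∀ B, h B = P.ellCtx goal B) :
    ∀ s s' : P.State, P.Reaches h s → P.Step h s s' →
      s.1 goal = none →
      ∀ B : P.Stmt, s.1 B = none → s'.1 B ≠ none →
        P.ell B + P.ellCtx goal B ≤ P.ell goal := by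
  intro s s' hre hs hgoal B hB hB'
  obtain rfl : h = P.ellCtx goal := funext hperf
  have hmono := ALDP.monotoneHeuristic_ellCtx goal
  have hinv := hre.invariant hmono
  cases hs with
  | skip => exact absurd hB hB'
  | expand _ _ B₀ w q hmem hmin _ =>
    obtain rfl : B = B₀ := by
      by_contra hne
      exact hB' (by simpa [Function.update_of_ne hne] using hB)
    calc P.ell B + P.ellCtx goal B ≤ w + P.ellCtx goal B := by
          gcongr; exact sInf_le (hinv.queue_derives _ hmem)
      _ = q := (hinv.queue_prio _ hmem).symm
      _ ≤ P.ell goal + P.ellCtx goal goal := hinv.le_ell_add hmono hgoal hmin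
      _ = P.ell goal := by rw [ALDP.ellCtx_self, add_zero]

/-- If `h` is a perfect heuristic for an additive lightest
derivation problem, i.e. `h(B) = ℓ(context(B),R)` for all `B`, then every
statement expanded by A*LD before `goal` is expanded appears in some lightest
derivation of `goal`: A*LD only expands statements `B` with
`ℓ(B,R) + ℓ(context(B),R) ≤ ℓ(goal,R)`. -/
theorem perfect_heuristic_expansions (P : ALDP) [Finite P.Rule]
    (goal : P.Stmt) (h : P.Stmt → ℝ≥0∞)
    (hperf : ∀ B, h B = P.ellCtx goal B) :
    ∀ s s' : P.State, P.Reaches h s → P.Step h s s' →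
      s.1 goal = none →
      ∀ B : P.Stmt, s.1 B = none → s'.1 B ≠ none →
        P.ell B + P.ellCtx goal B ≤ P.ell goal :=
  perfect_heuristic_expansions_general P goal h hperf
end
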